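/- Modified energy conservation of the explicit leapfrog Scheme-1 (Theorem 2.1, case Scheme-1). Suppose f^n, f^{n+1/2}, f^{n+1} are phase-space functions and E^n, E^{n+1}, B^{n−1/2}, B^n, B^{n+1/2}, B^{n+1}, B^{n+3/2} are spatial vector fields satisfying: (f^{n+1/2} − f^n)/(Δt/2) + v·∇_x f^n + (E^n + v×B^n)·∇_v f^n = 0; B^n = B^{n−1/2} − (Δt/2)∇×E^n; B^{n+1/2} = B^n − (Δt/2)∇×E^n; (E^{n+1} − E^n)/Δt = ∇×B^{n+1/2} − J^{n+1/2}, where J^{n+1/2}(x) = ∫_Ωv f^{n+1/2}(x,v) v dv; B^{n+1} = B^{n+1/2} − (Δt/2)∇×E^{n+1}; B^{n+3/2} = B^{n+1} − (Δt/2)∇×E^{n+1}; and (f^{n+1} − f^n)/Δt + v·∇_x f^{n+1/2} + ((E^n + E^{n+1})/2 + v×B^{n+1/2})·∇_v f^{n+1/2} = 0. Then the modified discrete total energy is conserved: ∫_Ωx ∫_Ωv f^{n+1} |v|² dv dx + ∫_Ωx (|E^{n+1}|² + B^{n+1/2}·B^{n+3/2}) dx = ∫_Ωx ∫_Ωv f^n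 |v|² dv dx + ∫_Ωx (|E^n|² + B^{n−1/2}·B^{n+1/2}) dx. -/

import Mathlib

open MeasureTheory Matrix

noncomputable section

/-- Points of `ℝ³`. -/
abbrev V3 : Type := Fin 3 → ℝ

/-- Partial derivative in the `i`-th coordinate direction. -/
def pd (i : Fin 3) (g : V3 → ℝ) (x : V3) : ℝ := fderiv ℝ g x (Pi.single i 1)

/-- Curl of a vector field on `ℝ³`. -/
def curl (U : V3 → V3) (x : V3) : V3 :=
  ![pd 1 (fun y => U y 2) x - pd 2 (fun y => U y 1) x,
    pd 2 (fun y => U y 0) x - pd 0 (fun y => U y 2) x,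
    pd 0 (fun y => U y 1) x - pd 1 (fun y => U y 0) x]

/-- Gradient in the `x`-variable of a phase-space function. -/
def gradX (f : V3 → V3 → ℝ) (x v : V3) : V3 :=
  fun i => fderiv ℝ (fun y => f y v) x (Pi.single i 1)

/-- Gradient in the `v`-variable of a phase-space function. -/
def gradV (f : V3 → V3 → ℝ) (x v : V3) : V3 :=
  fun i => fderiv ℝ (fun w => f x w) v (Pi.single i 1)

/-- The period box `[0,L]³`. -/
def box (L : ℝ) : Set V3 := Set.Icc 0 (fun _ => L)

/-- A spatial vector field: smooth and `L`-periodic. -/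
def IsSpatialVF (L : ℝ) (U : V3 → V3) : Prop :=
  ContDiff ℝ (⊤ : ℕ∞) U ∧ ∀ (x : V3) (i : Fin 3), U (x + L • (Pi.single i (1:ℝ) : V3)) = U x

/-- A phase-space function: smooth, `L`-periodic in `x`, compactly supported in `v`
(uniformly in `x`). -/
def IsPhase (L : ℝ) (f : V3 → V3 → ℝ) : Prop :=
  ContDiff ℝ (⊤ : ℕ∞) (fun p : V3 × V3 => f p.1 p.2) ∧
  (∀ (x v : V3) (i : Fin 3), f (x + L • (Pi.single i (1:ℝ) : V3)) v = f x v) ∧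
  ∃ R : ℝ, ∀ (x v : V3), R ≤ ‖v‖ → f x v = 0

/-- Current density `J(x) = ∫ f(x,v) v dv`. -/
def Jcur (f : V3 → V3 → ℝ) (x : V3) : V3 := ∫ v : V3, f x v • v

/-- Kinetic energy `∫_Ωx ∫_Ωv f |v|² dv dx`. -/
def kinE (L : ℝ) (f : V3 → V3 → ℝ) : ℝ :=
  ∫ x in box L, ∫ v : V3, f x v * (v ⬝ᵥ v)

/-- Field energy `∫_Ωx |U|² dx`. -/
def fieldE (L : ℝ) (U : V3 → V3) : ℝ := ∫ x in box L, U x ⬝ᵥ U x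


/-! ### Auxiliary lemmas -/

section Aux

open ContinuousLinearMap

lemma pd_add {f g : V3 → ℝ} {x : V3} (hf : DifferentiableAt ℝ f x) (hg : DifferentiableAt ℝ g x)
    (i : Fin 3) : pd i (fun y => f y + g y) x = pd i f x + pd i g x := by
  simp [pd, fderiv_fun_add hf hg]

lemma pd_sub {f g : V3 → ℝ} {x : V3} (hf : DifferentiableAt ℝ f x) (hg : DifferentiableAt ℝ g x)
    (i : Fin 3) : pd i (fun y => f y - g y) x = pd i f x - pd i g x := by
  simp [pd, fderiv_fun_sub hf hg]

lemma pd_mul {f g : V3 → ℝ} {x : V3} (hf : DifferentiableAt ℝ f x) (hg : DifferentiableAt ℝ g x)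
    (i : Fin 3) : pd i (fun y => f y * g y) x = pd i f x * g x + f x * pd i g x := by
  simp [pd, fderiv_fun_mul hf hg]; ring

lemma pd_const (c : ℝ) (i : Fin 3) (x : V3) : pd i (fun _ => c) x = 0 := by
  simp [pd]

lemma contDiff_coord (j : Fin 3) : ContDiff ℝ (⊤ : ℕ∞) (fun v : V3 => v j) :=
  (ContinuousLinearMap.proj j : V3 →L[ℝ] ℝ).contDiff

lemma pd_coord (i j : Fin 3) (x : V3) :
    pd i (fun v : V3 => v j) x = if j = i then 1 else 0 := by
  have h : HasFDerivAt (fun v : V3 => v j) (ContinuousLinearMap.proj j : V3 →L[ℝ] ℝ) x :=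
    (ContinuousLinearMap.proj j : V3 →L[ℝ] ℝ).hasFDerivAt
  simp [pd, h.fderiv, Pi.single_apply]

lemma contDiff_dot : ContDiff ℝ (⊤ : ℕ∞) (fun v : V3 => v ⬝ᵥ v) := by
  have : (fun v : V3 => v ⬝ᵥ v) = fun v : V3 => v 0 * v 0 + v 1 * v 1 + v 2 * v 2 := by
    funext v; simp [dotProduct, Fin.sum_univ_three]
  rw [this]
  exact (((contDiff_coord 0).mul (contDiff_coord 0)).add
    ((contDiff_coord 1).mul (contDiff_coord 1))).add ((contDiff_coord 2).mul (contDiff_coord 2))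

lemma pd_dot (i : Fin 3) (x : V3) : pd i (fun v : V3 => v ⬝ᵥ v) x = 2 * x i := by
  have e : (fun v : V3 => v ⬝ᵥ v) = fun v : V3 => v 0 * v 0 + (v 1 * v 1 + v 2 * v 2) := by
    funext v; simp [dotProduct, Fin.sum_univ_three]; ring
  have hd : ∀ j : Fin 3, Differentiable ℝ (fun v : V3 => v j) := fun j =>
    (contDiff_coord j).differentiable (by simp)
  have hdm : ∀ j : Fin 3, Differentiable ℝ (fun v : V3 => v j * v j) := fun j =>
    (hd j).mul (hd j)
  rw [e, pd_add ((hdm 0) x) (((hdm 1).fun_add (hdm 2)) x) i,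
    pd_add ((hdm 1) x) ((hdm 2) x) i,
    pd_mul ((hd 0) x) ((hd 0) x) i, pd_mul ((hd 1) x) ((hd 1) x) i,
    pd_mul ((hd 2) x) ((hd 2) x) i, pd_coord, pd_coord, pd_coord]
  fin_cases i <;> simp <;> ring

/-- The divergence theorem on a closed box for smooth integrands. -/
lemma div_box (a b : V3) (hab : a ≤ b) (F : Fin 3 → V3 → ℝ) (hF : ∀ i, ContDiff ℝ (⊤ : ℕ∞) (F i)) :
    (∫ x in Set.Icc a b, ∑ i, pd i (F i) x) =
      ∑ i : Fin 3, ((∫ y in Set.Icc (a ∘ i.succAbove) (b ∘ i.succAbove),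
            F i (i.insertNth (b i) y)) -
          ∫ y in Set.Icc (a ∘ i.succAbove) (b ∘ i.succAbove), F i (i.insertNth (a i) y)) := by
  have h := MeasureTheory.integral_divergence_of_hasFDerivAt_off_countable' (n := 2)
    a b hab F (fun i x => fderiv ℝ (F i) x) ∅ Set.countable_empty
    (fun i => ((hF i).continuous).continuousOn)
    (fun x _ i => ((hF i).differentiable (by simp) x).hasFDerivAt)
    ?_
  · exact h
  · apply ContinuousOn.integrableOn_compact isCompact_Icc
    apply Continuous.continuousOn
    exact continuous_finset_sum _ fun i _ =>
      ((hF i).continuous_fderiv (by simp)).clm_apply continuous_const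

lemma insertNth_shift (L : ℝ) (i : Fin 3) (y : Fin 2 → ℝ) :
    i.insertNth (0:ℝ) y + L • (Pi.single i (1:ℝ) : V3) = i.insertNth L y := by
  funext j
  rcases eq_or_ne j i with rfl | hj
  · simp
  · obtain ⟨k, rfl⟩ := Fin.exists_succAbove_eq hj
    simp [Pi.single_eq_of_ne (Fin.succAbove_ne i k)]

/-- The integral of a divergence of a periodic smooth field over the period box vanishes. -/
lemma measurableSet_box (L : ℝ) : MeasurableSet (box L) := measurableSet_Icc

lemma isCompact_box (L : ℝ) : IsCompact (box L) := isCompact_Icc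

lemma periodic_div_zero {L : ℝ} (hL : 0 < L) (F : Fin 3 → V3 → ℝ)
    (hF : ∀ i, ContDiff ℝ (⊤ : ℕ∞) (F i))
    (hper : ∀ i x, F i (x + L • (Pi.single i (1:ℝ) : V3)) = F i x) :
    (∫ x in box L, ∑ i, pd i (F i) x) = 0 := by
  have hab : (0:V3) ≤ fun _ => L := fun i => hL.le
  rw [box, div_box 0 (fun _ => L) hab F hF]
  apply Finset.sum_eq_zero
  intro i _
  rw [sub_eq_zero]
  apply setIntegral_congr_fun measurableSet_Icc
  intro y _
  show F i (i.insertNth ((fun _ => L) i) y) = F i (i.insertNth ((0:V3) i) y)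
  have h0 : (0:V3) i = (0:ℝ) := rfl
  rw [h0, ← insertNth_shift L i y, hper i]

lemma periodic_pd_zero {L : ℝ} (hL : 0 < L) (g : V3 → ℝ) (hg : ContDiff ℝ (⊤ : ℕ∞) g)
    (hper : ∀ (i : Fin 3) x, g (x + L • (Pi.single i (1:ℝ) : V3)) = g x) (i : Fin 3) :
    (∫ x in box L, pd i g x) = 0 := by
  have h := periodic_div_zero hL (fun j => if j = i then g else fun _ => 0)
    (fun j => by
      by_cases h : j = i
      · simpa [h] using hg
      · simp only [h, if_false]; exact contDiff_const)
    (fun j x => by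
      by_cases h : j = i
      · subst h; simpa using hper j x
      · simp [h])
  rw [← h]
  apply setIntegral_congr_fun (measurableSet_box L)
  intro x _
  show pd i g x = ∑ j : Fin 3, pd j ((fun j => if j = i then g else fun _ => 0) j) x
  rw [Finset.sum_eq_single_of_mem i (Finset.mem_univ i)]
  · simp
  · intro j _ hj
    simp [hj, pd_const]

lemma pd_eq_zero_of_eventually_zero {g : V3 → ℝ} {x : V3} (h : ∀ᶠ y in nhds x, g y = 0)
    (i : Fin 3) : pd i g x = 0 := by
  have : fderiv ℝ g x = fderiv ℝ (fun _ => (0:ℝ)) x :=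
    Filter.EventuallyEq.fderiv_eq h
  simp [pd, this]

lemma pd_zero_of_far {g : V3 → ℝ} {R : ℝ} (hR : ∀ v : V3, R ≤ ‖v‖ → g v = 0) {v : V3}
    (hv : R < ‖v‖) (i : Fin 3) : pd i g v = 0 := by
  apply pd_eq_zero_of_eventually_zero _ i
  have hopen : IsOpen {w : V3 | R < ‖w‖} := isOpen_lt continuous_const continuous_norm
  filter_upwards [hopen.mem_nhds hv] with w hw
  exact hR w (le_of_lt hw)

/-- The integral over `ℝ³` of a divergence of a compactly supported smooth field vanishes. -/
lemma compact_div_zero (R : ℝ) (F : Fin 3 → V3 → ℝ) (hF : ∀ i, ContDiff ℝ (⊤ : ℕ∞) (F i))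
    (hsupp : ∀ i (v : V3), R ≤ ‖v‖ → F i v = 0) :
    (∫ v : V3, ∑ i, pd i (F i) v) = 0 := by
  set M : ℝ := max R 0 + 1 with hM
  have hRM : R < M := lt_of_le_of_lt (le_max_left R 0) (by linarith [le_max_right R 0])
  have hM0 : 0 < M := lt_of_le_of_lt (le_max_right R 0) (by linarith [le_max_left R 0])
  have hab : (fun _ => -M : V3) ≤ fun _ => M := fun i => by simp; linarith
  have hpd : ∀ (i : Fin 3) (v : V3), M ≤ ‖v‖ → pd i (F i) v = 0 := fun i v hv =>
    pd_zero_of_far (hsupp i) (lt_of_lt_of_le hRM hv) i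
  have hsub : (∫ v : V3, ∑ i, pd i (F i) v)
      = ∫ v in Set.Icc (fun _ => -M : V3) (fun _ => M), ∑ i, pd i (F i) v := by
    symm
    apply setIntegral_eq_integral_of_forall_compl_eq_zero
    intro v hv
    have : M ≤ ‖v‖ := by
      simp only [Set.mem_Icc, not_and_or, Pi.le_def, not_forall, not_le] at hv
      have hj : ∃ j, M ≤ |v j| := by
        rcases hv with ⟨j, hj⟩ | ⟨j, hj⟩
        · exact ⟨j, by rw [abs_of_neg (by linarith)]; linarith⟩
        · exact ⟨j, by rw [abs_of_pos (by linarith)]; linarith⟩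
      obtain ⟨j, hj⟩ := hj
      exact le_trans hj (norm_le_pi_norm v j)
    exact Finset.sum_eq_zero fun i _ => hpd i v this
  rw [hsub, div_box _ _ hab F hF]
  apply Finset.sum_eq_zero
  intro i _
  have hz : ∀ (c : ℝ), |c| = M → ∀ y : Fin 2 → ℝ, F i (i.insertNth c y) = 0 := by
    intro c hc y
    apply hsupp i
    have h1 : |(i.insertNth c y : V3) i| = M := by
      rw [Fin.insertNth_apply_same]; exact hc
    have h2 : |(i.insertNth c y : V3) i| ≤ ‖(i.insertNth c y : V3)‖ := by
      simpa using norm_le_pi_norm (i.insertNth c y : V3) i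
    linarith
  have h1 : ∀ y : Fin 2 → ℝ, F i (i.insertNth ((fun _ => M : V3) i) y) = 0 :=
    fun y => hz M (abs_of_pos hM0) y
  have h2 : ∀ y : Fin 2 → ℝ, F i (i.insertNth ((fun _ => -M : V3) i) y) = 0 :=
    fun y => hz (-M) (by rw [abs_neg, abs_of_pos hM0]) y
  simp only [h1, h2, integral_zero, sub_zero]

/-- A continuous function on `ℝ³` vanishing outside a ball is integrable. -/
lemma integrable_far {E : Type*} [NormedAddCommGroup E] [NormedSpace ℝ E] {h : V3 → E}
    (hc : Continuous h) (R : ℝ) (hs : ∀ v : V3, R ≤ ‖v‖ → h v = 0) :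
    Integrable h (volume : Measure V3) := by
  apply hc.integrable_of_hasCompactSupport
  apply HasCompactSupport.intro (isCompact_closedBall (0:V3) (max R 0))
  intro v hv
  apply hs
  have : max R 0 < ‖v‖ := by simpa [Metric.mem_closedBall, dist_zero_right] using hv
  exact le_trans (le_max_left R 0) this.le

end Aux


section Aux2

/-- Smoothness of the components of a constant-plus-cross field. -/
lemma contDiff_cross_comp (c b : V3) (i : Fin 3) :
    ContDiff ℝ (⊤ : ℕ∞) (fun v : V3 => (c + v ⨯₃ b) i) := by
  fin_cases i
  · show ContDiff ℝ (⊤ : ℕ∞) (fun v : V3 => (c + v ⨯₃ b) (0 : Fin 3))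
    have : (fun v : V3 => (c + v ⨯₃ b) 0) = fun v : V3 => c 0 + (v 1 * b 2 - v 2 * b 1) := by
      funext v; simp [cross_apply]
    rw [this]
    exact contDiff_const.add (((contDiff_coord 1).mul contDiff_const).sub
      ((contDiff_coord 2).mul contDiff_const))
  · show ContDiff ℝ (⊤ : ℕ∞) (fun v : V3 => (c + v ⨯₃ b) (1 : Fin 3))
    have : (fun v : V3 => (c + v ⨯₃ b) 1) = fun v : V3 => c 1 + (v 2 * b 0 - v 0 * b 2) := by
      funext v; simp [cross_apply]
    rw [this]
    exact contDiff_const.add (((contDiff_coord 2).mul contDiff_const).sub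
      ((contDiff_coord 0).mul contDiff_const))
  · show ContDiff ℝ (⊤ : ℕ∞) (fun v : V3 => (c + v ⨯₃ b) (2 : Fin 3))
    have : (fun v : V3 => (c + v ⨯₃ b) 2) = fun v : V3 => c 2 + (v 0 * b 1 - v 1 * b 0) := by
      funext v; simp [cross_apply]
    rw [this]
    exact contDiff_const.add (((contDiff_coord 0).mul contDiff_const).sub
      ((contDiff_coord 1).mul contDiff_const))

lemma pd_cross_diag (c b : V3) (i : Fin 3) (v : V3) :
    pd i (fun w : V3 => (c + w ⨯₃ b) i) v = 0 := by
  have hd : ∀ j : Fin 3, Differentiable ℝ (fun v : V3 => v j) := fun j =>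
    (contDiff_coord j).differentiable (by simp)
  have hmul : ∀ (j : Fin 3) (r : ℝ), Differentiable ℝ (fun v : V3 => v j * r) := fun j r =>
    (hd j).mul (differentiable_const r)
  have key : ∀ (m j k : Fin 3) (r s : ℝ), j ≠ m → k ≠ m →
      pd m (fun w : V3 => w j * r - w k * s) v = 0 := by
    intro m j k r s hj hk
    rw [pd_sub ((hmul j r) v) ((hmul k s) v), pd_mul ((hd j) v) ((differentiable_const r) v),
      pd_mul ((hd k) v) ((differentiable_const s) v), pd_coord, pd_coord, pd_const, pd_const]
    simp [hj, hk]
  fin_cases i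
  · show pd (0 : Fin 3) (fun w : V3 => (c + w ⨯₃ b) (0 : Fin 3)) v = 0
    have e : (fun w : V3 => (c + w ⨯₃ b) 0) = fun w : V3 => c 0 + (w 1 * b 2 - w 2 * b 1) := by
      funext w; simp [cross_apply]
    rw [e, pd_add ((differentiable_const (c 0)) v)
      (((hmul 1 (b 2)).fun_sub (hmul 2 (b 1))) v), pd_const, key 0 1 2 (b 2) (b 1)
      (by decide) (by decide)]
    ring
  · show pd (1 : Fin 3) (fun w : V3 => (c + w ⨯₃ b) (1 : Fin 3)) v = 0
    have e : (fun w : V3 => (c + w ⨯₃ b) 1) = fun w : V3 => c 1 + (w 2 * b 0 - w 0 * b 2) := by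
      funext w; simp [cross_apply]
    rw [e, pd_add ((differentiable_const (c 1)) v)
      (((hmul 2 (b 0)).fun_sub (hmul 0 (b 2))) v), pd_const, key 1 2 0 (b 0) (b 2)
      (by decide) (by decide)]
    ring
  · show pd (2 : Fin 3) (fun w : V3 => (c + w ⨯₃ b) (2 : Fin 3)) v = 0
    have e : (fun w : V3 => (c + w ⨯₃ b) 2) = fun w : V3 => c 2 + (w 0 * b 1 - w 1 * b 0) := by
      funext w; simp [cross_apply]
    rw [e, pd_add ((differentiable_const (c 2)) v)
      (((hmul 0 (b 1)).fun_sub (hmul 1 (b 0))) v), pd_const, key 2 0 1 (b 1) (b 0)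
      (by decide) (by decide)]
    ring

/-- Integration by parts in velocity space. -/
lemma force_IBP (g : V3 → ℝ) (hg : ContDiff ℝ (⊤ : ℕ∞) g) (R : ℝ)
    (hR : ∀ v : V3, R ≤ ‖v‖ → g v = 0) (c b : V3) :
    (∫ v : V3, ((c + v ⨯₃ b) ⬝ᵥ (fun i => pd i g v)) * (v ⬝ᵥ v))
      = -2 * ∫ v : V3, g v * (c ⬝ᵥ v) := by
  set F : Fin 3 → V3 → ℝ := fun i v => (c + v ⨯₃ b) i * (g v * (v ⬝ᵥ v)) with hF
  have hgdot : ContDiff ℝ (⊤ : ℕ∞) (fun v : V3 => g v * (v ⬝ᵥ v)) := hg.mul contDiff_dot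
  have hFc : ∀ i, ContDiff ℝ (⊤ : ℕ∞) (F i) := fun i => (contDiff_cross_comp c b i).mul hgdot
  have hFsupp : ∀ i (v : V3), R ≤ ‖v‖ → F i v = 0 := by
    intro i v hv; simp [hF, hR v hv]
  have h0 := compact_div_zero R F hFc hFsupp
  have key : ∀ v : V3, ∑ i, pd i (F i) v
      = ((c + v ⨯₃ b) ⬝ᵥ (fun i => pd i g v)) * (v ⬝ᵥ v) + 2 * (g v * (c ⬝ᵥ v)) := by
    intro v
    have hAd : ∀ i : Fin 3, DifferentiableAt ℝ (fun w : V3 => (c + w ⨯₃ b) i) v := fun i =>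
      ((contDiff_cross_comp c b i).differentiable (by simp)) v
    have hgd : DifferentiableAt ℝ g v := (hg.differentiable (by simp)) v
    have hdotd : DifferentiableAt ℝ (fun v : V3 => v ⬝ᵥ v) v :=
      (contDiff_dot.differentiable (by simp)) v
    have hstep : ∀ i : Fin 3, pd i (F i) v
        = (c + v ⨯₃ b) i * (pd i g v * (v ⬝ᵥ v) + g v * (2 * v i)) := by
      intro i
      have h1 : pd i (F i) v = pd i (fun w : V3 => (c + w ⨯₃ b) i) v * (g v * (v ⬝ᵥ v))
          + (c + v ⨯₃ b) i * pd i (fun w : V3 => g w * (w ⬝ᵥ w)) v :=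
        pd_mul (hAd i) ((hgdot.differentiable (by simp)) v) i
      rw [h1, pd_cross_diag, pd_mul hgd hdotd, pd_dot]
      ring
    rw [Fin.sum_univ_three, hstep 0, hstep 1, hstep 2]
    simp only [dotProduct, Fin.sum_univ_three]
    simp [cross_apply]
    ring
  have hcont_pd : ∀ i : Fin 3, Continuous (fun v : V3 => pd i g v) := fun i =>
    (hg.continuous_fderiv (by simp)).clm_apply continuous_const
  have hI1 : Integrable (fun v : V3 => ((c + v ⨯₃ b) ⬝ᵥ (fun i => pd i g v)) * (v ⬝ᵥ v))
      (volume : Measure V3) := by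
    refine integrable_far ?_ (max R 0 + 1) ?_
    · apply Continuous.mul _ contDiff_dot.continuous
      have e : (fun v : V3 => (c + v ⨯₃ b) ⬝ᵥ (fun i => pd i g v))
          = fun v : V3 => ∑ i : Fin 3, (c + v ⨯₃ b) i * pd i g v := by
        funext v; simp [dotProduct]
      rw [e]
      exact continuous_finset_sum _ fun i _ =>
        ((contDiff_cross_comp c b i).continuous).mul (hcont_pd i)
    · intro v hv
      have hRv : R < ‖v‖ := by
        have := le_max_left R 0; linarith
      have : (fun i : Fin 3 => pd i g v) = 0 := funext fun i => pd_zero_of_far hR hRv i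
      rw [this, dotProduct_zero, zero_mul]
  have hI2 : Integrable (fun v : V3 => g v * (c ⬝ᵥ v)) (volume : Measure V3) := by
    refine integrable_far ?_ R ?_
    · apply hg.continuous.mul
      show Continuous fun v : V3 => c ⬝ᵥ v
      have e : (fun v : V3 => c ⬝ᵥ v) = fun v : V3 => ∑ i : Fin 3, c i * v i := by
        funext v; simp [dotProduct]
      rw [e]
      exact continuous_finset_sum _ fun i _ => continuous_const.mul (continuous_apply i)
    · intro v hv; rw [hR v hv, zero_mul]
  rw [show (fun v : V3 => ∑ i, pd i (F i) v)
      = fun v : V3 => ((c + v ⨯₃ b) ⬝ᵥ (fun i => pd i g v)) * (v ⬝ᵥ v)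
        + 2 * (g v * (c ⬝ᵥ v)) from funext key] at h0
  rw [integral_add hI1 (hI2.const_mul 2), integral_const_mul] at h0
  linarith

end Aux2


section Aux3

lemma contDiff_comp_pi {U : V3 → V3} (hU : ContDiff ℝ (⊤ : ℕ∞) U) (j : Fin 3) :
    ContDiff ℝ (⊤ : ℕ∞) (fun y => U y j) := contDiff_pi.mp hU j

lemma div_cross (U W : V3 → V3) (hU : ContDiff ℝ (⊤ : ℕ∞) U) (hW : ContDiff ℝ (⊤ : ℕ∞) W) (x : V3) :
    (∑ i : Fin 3, pd i (fun y => (U y ⨯₃ W y) i) x)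
      = W x ⬝ᵥ curl U x - U x ⬝ᵥ curl W x := by
  have hu : ∀ j, Differentiable ℝ (fun y => U y j) := fun j =>
    (contDiff_comp_pi hU j).differentiable (by simp)
  have hw : ∀ j, Differentiable ℝ (fun y => W y j) := fun j =>
    (contDiff_comp_pi hW j).differentiable (by simp)
  have e0 : (fun y => (U y ⨯₃ W y) (0 : Fin 3)) = fun y => U y 1 * W y 2 - U y 2 * W y 1 := by
    funext y; simp [cross_apply]
  have e1 : (fun y => (U y ⨯₃ W y) (1 : Fin 3)) = fun y => U y 2 * W y 0 - U y 0 * W y 2 := by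
    funext y; simp [cross_apply]
  have e2 : (fun y => (U y ⨯₃ W y) (2 : Fin 3)) = fun y => U y 0 * W y 1 - U y 1 * W y 0 := by
    funext y; simp [cross_apply]
  rw [Fin.sum_univ_three, e0, e1, e2,
    pd_sub (((hu 1).fun_mul (hw 2)) x) (((hu 2).fun_mul (hw 1)) x),
    pd_sub (((hu 2).fun_mul (hw 0)) x) (((hu 0).fun_mul (hw 2)) x),
    pd_sub (((hu 0).fun_mul (hw 1)) x) (((hu 1).fun_mul (hw 0)) x),
    pd_mul ((hu 1) x) ((hw 2) x), pd_mul ((hu 2) x) ((hw 1) x),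
    pd_mul ((hu 2) x) ((hw 0) x), pd_mul ((hu 0) x) ((hw 2) x),
    pd_mul ((hu 0) x) ((hw 1) x), pd_mul ((hu 1) x) ((hw 0) x)]
  simp [curl, dotProduct, Fin.sum_univ_three]
  ring

/-- Integration by parts for the curl on the period box. -/
lemma curl_IBP {L : ℝ} (hL : 0 < L) (U W : V3 → V3) (hU : ContDiff ℝ (⊤ : ℕ∞) U)
    (hW : ContDiff ℝ (⊤ : ℕ∞) W)
    (hUper : ∀ (x : V3) (i : Fin 3), U (x + L • (Pi.single i (1:ℝ) : V3)) = U x)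
    (hWper : ∀ (x : V3) (i : Fin 3), W (x + L • (Pi.single i (1:ℝ) : V3)) = W x) :
    (∫ x in box L, (W x ⬝ᵥ curl U x - U x ⬝ᵥ curl W x)) = 0 := by
  have hsm : ∀ i : Fin 3, ContDiff ℝ (⊤ : ℕ∞) (fun y => (U y ⨯₃ W y) i) := by
    intro i
    fin_cases i
    · show ContDiff ℝ (⊤ : ℕ∞) (fun y => (U y ⨯₃ W y) (0 : Fin 3))
      have e : (fun y => (U y ⨯₃ W y) (0 : Fin 3))
          = fun y => U y 1 * W y 2 - U y 2 * W y 1 := by funext y; simp [cross_apply]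
      rw [e]
      exact ((contDiff_comp_pi hU 1).mul (contDiff_comp_pi hW 2)).sub
        ((contDiff_comp_pi hU 2).mul (contDiff_comp_pi hW 1))
    · show ContDiff ℝ (⊤ : ℕ∞) (fun y => (U y ⨯₃ W y) (1 : Fin 3))
      have e : (fun y => (U y ⨯₃ W y) (1 : Fin 3))
          = fun y => U y 2 * W y 0 - U y 0 * W y 2 := by funext y; simp [cross_apply]
      rw [e]
      exact ((contDiff_comp_pi hU 2).mul (contDiff_comp_pi hW 0)).sub
        ((contDiff_comp_pi hU 0).mul (contDiff_comp_pi hW 2))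
    · show ContDiff ℝ (⊤ : ℕ∞) (fun y => (U y ⨯₃ W y) (2 : Fin 3))
      have e : (fun y => (U y ⨯₃ W y) (2 : Fin 3))
          = fun y => U y 0 * W y 1 - U y 1 * W y 0 := by funext y; simp [cross_apply]
      rw [e]
      exact ((contDiff_comp_pi hU 0).mul (contDiff_comp_pi hW 1)).sub
        ((contDiff_comp_pi hU 1).mul (contDiff_comp_pi hW 0))
  have hper : ∀ (i : Fin 3) (x : V3),
      (fun y => (U y ⨯₃ W y) i) (x + L • (Pi.single i (1:ℝ) : V3))
        = (fun y => (U y ⨯₃ W y) i) x := by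
    intro i x
    simp only [hUper x i, hWper x i]
  have h := periodic_div_zero hL (fun i y => (U y ⨯₃ W y) i) hsm hper
  rw [← h]
  apply setIntegral_congr_fun (measurableSet_box L)
  intro x _
  exact (div_cross U W hU hW x).symm

lemma curl_add (U W : V3 → V3) (hU : ContDiff ℝ (⊤ : ℕ∞) U) (hW : ContDiff ℝ (⊤ : ℕ∞) W) (x : V3) :
    curl (fun y => U y + W y) x = curl U x + curl W x := by
  have hc : ∀ (j k : Fin 3), pd j (fun y => U y k + W y k) x
      = pd j (fun y => U y k) x + pd j (fun y => W y k) x := by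
    intro j k
    exact pd_add (((contDiff_comp_pi hU k).differentiable (by simp)) x)
      (((contDiff_comp_pi hW k).differentiable (by simp)) x) j
  funext i
  fin_cases i <;> simp [curl, hc] <;> ring

section grad

variable {f : V3 → V3 → ℝ}

lemma gradX_eq (hf : ContDiff ℝ (⊤ : ℕ∞) (fun p : V3 × V3 => f p.1 p.2)) (x v : V3) (i : Fin 3) :
    gradX f x v i
      = fderiv ℝ (fun p : V3 × V3 => f p.1 p.2) (x, v) ((Pi.single i (1:ℝ) : V3), 0) := by
  have hdiff : DifferentiableAt ℝ (fun p : V3 × V3 => f p.1 p.2) (x, v) :=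
    (hf.differentiable (by simp)) (x, v)
  have h : HasFDerivAt (fun y : V3 => f y v)
      ((fderiv ℝ (fun p : V3 × V3 => f p.1 p.2) (x, v)).comp
        (ContinuousLinearMap.inl ℝ V3 V3)) x :=
    by have := hdiff.hasFDerivAt.comp x (hasFDerivAt_prodMk_left (𝕜 := ℝ) x v); exact this
  show fderiv ℝ (fun y => f y v) x (Pi.single i 1) = _
  rw [h.fderiv]
  simp

lemma gradV_eq (hf : ContDiff ℝ (⊤ : ℕ∞) (fun p : V3 × V3 => f p.1 p.2)) (x v : V3) (i : Fin 3) :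
    gradV f x v i
      = fderiv ℝ (fun p : V3 × V3 => f p.1 p.2) (x, v) (0, (Pi.single i (1:ℝ) : V3)) := by
  have hdiff : DifferentiableAt ℝ (fun p : V3 × V3 => f p.1 p.2) (x, v) :=
    (hf.differentiable (by simp)) (x, v)
  have h : HasFDerivAt (fun w : V3 => f x w)
      ((fderiv ℝ (fun p : V3 × V3 => f p.1 p.2) (x, v)).comp
        (ContinuousLinearMap.inr ℝ V3 V3)) v :=
    hdiff.hasFDerivAt.comp v (hasFDerivAt_prodMk_right (𝕜 := ℝ) x v)
  show fderiv ℝ (fun w => f x w) v (Pi.single i 1) = _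
  rw [h.fderiv]
  simp

lemma gradX_cont (hf : ContDiff ℝ (⊤ : ℕ∞) (fun p : V3 × V3 => f p.1 p.2)) (i : Fin 3) : Continuous (fun p : V3 × V3 => gradX f p.1 p.2 i) := by
  have e : (fun p : V3 × V3 => gradX f p.1 p.2 i)
      = fun p : V3 × V3 => fderiv ℝ (fun p : V3 × V3 => f p.1 p.2) p
          ((Pi.single i (1:ℝ) : V3), 0) := by
    funext p; exact gradX_eq hf p.1 p.2 i
  rw [e]
  exact (hf.continuous_fderiv (by simp)).clm_apply continuous_const

lemma gradV_cont (hf : ContDiff ℝ (⊤ : ℕ∞) (fun p : V3 × V3 => f p.1 p.2)) (i : Fin 3) : Continuous (fun p : V3 × V3 => gradV f p.1 p.2 i) := by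
  have e : (fun p : V3 × V3 => gradV f p.1 p.2 i)
      = fun p : V3 × V3 => fderiv ℝ (fun p : V3 × V3 => f p.1 p.2) p
          (0, (Pi.single i (1:ℝ) : V3)) := by
    funext p; exact gradV_eq hf p.1 p.2 i
  rw [e]
  exact (hf.continuous_fderiv (by simp)).clm_apply continuous_const

end grad

/-- Integrability over the box times velocity space. -/
lemma prod_int (L : ℝ) (h : V3 → V3 → ℝ) (hc : Continuous (fun p : V3 × V3 => h p.1 p.2))
    (R : ℝ) (hR : ∀ x v : V3, R ≤ ‖v‖ → h x v = 0) :
    Integrable (fun p : V3 × V3 => h p.1 p.2)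
      (((volume : Measure V3).restrict (box L)).prod (volume : Measure V3)) := by
  rw [Measure.restrict_prod_eq_prod_univ]
  have h1 : IntegrableOn (fun p : V3 × V3 => h p.1 p.2)
      ((box L) ×ˢ Metric.closedBall (0:V3) (max R 0))
      ((volume : Measure V3).prod (volume : Measure V3)) :=
    hc.continuousOn.integrableOn_compact ((isCompact_box L).prod (isCompact_closedBall _ _))
  apply h1.of_forall_diff_eq_zero ((measurableSet_box L).prod MeasurableSet.univ)
  rintro ⟨x, v⟩ hp
  simp only [Set.mem_diff, Set.mem_prod, Set.mem_univ, and_true, not_and] at hp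
  have hv : v ∉ Metric.closedBall (0:V3) (max R 0) := hp.2 hp.1
  apply hR
  have hlt : max R 0 < ‖v‖ := by simpa [Metric.mem_closedBall, dist_zero_right] using hv
  exact le_trans (le_max_left R 0) hlt.le

end Aux3

/-- Modified energy conservation of the explicit leapfrog Scheme-1
(Theorem 2.1, case Scheme-1). `Bm, Bh, Bt` stand for `B^{n-1/2}, B^{n+1/2}, B^{n+3/2}`. -/
theorem scheme1_modified_energy_conservation
    (L Δt : ℝ) (hL : 0 < L) (hΔt : 0 < Δt)
    (f0 fh f1 : V3 → V3 → ℝ) (En E1 Bm Bn Bh B1 Bt : V3 → V3)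
    (hf0 : IsPhase L f0) (hfh : IsPhase L fh) (hf1 : IsPhase L f1)
    (hEn : IsSpatialVF L En) (hE1 : IsSpatialVF L E1)
    (hBm : IsSpatialVF L Bm) (hBn : IsSpatialVF L Bn) (hBh : IsSpatialVF L Bh)
    (hB1 : IsSpatialVF L B1) (hBt : IsSpatialVF L Bt)
    (hVlasovHalf : ∀ x v : V3,
      (fh x v - f0 x v) / (Δt / 2) + v ⬝ᵥ gradX f0 x v
        + (En x + crossProduct v (Bn x)) ⬝ᵥ gradV f0 x v = 0)
    (hBn' : ∀ x : V3, Bn x = Bm x - (Δt / 2) • curl En x)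
    (hBh' : ∀ x : V3, Bh x = Bn x - (Δt / 2) • curl En x)
    (hAmpere : ∀ x : V3, Δt⁻¹ • (E1 x - En x) = curl Bh x - Jcur fh x)
    (hB1' : ∀ x : V3, B1 x = Bh x - (Δt / 2) • curl E1 x)
    (hBt' : ∀ x : V3, Bt x = B1 x - (Δt / 2) • curl E1 x)
    (hVlasovFull : ∀ x v : V3,
      (f1 x v - f0 x v) / Δt + v ⬝ᵥ gradX fh x v
        + ((2:ℝ)⁻¹ • (En x + E1 x) + crossProduct v (Bh x)) ⬝ᵥ gradV fh x v = 0) :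
    kinE L f1 + ∫ x in box L, (E1 x ⬝ᵥ E1 x + Bh x ⬝ᵥ Bt x)
      = kinE L f0 + ∫ x in box L, (En x ⬝ᵥ En x + Bm x ⬝ᵥ Bh x) := by
  classical
  obtain ⟨hf0s, hf0per, R0, hR0⟩ := hf0
  obtain ⟨hfhs, hfhper, Rh, hRh⟩ := hfh
  obtain ⟨hf1s, hf1per, R1, hR1⟩ := hf1
  have hΔ : Δt ≠ 0 := ne_of_gt hΔt
  have hdotc : Continuous (fun v : V3 => v ⬝ᵥ v) := contDiff_dot.continuous
  -- partial smoothness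
  have hf0x : ∀ x, ContDiff ℝ (⊤ : ℕ∞) (fun v => f0 x v) := fun x =>
    hf0s.comp (contDiff_const.prodMk contDiff_id)
  have hfhx : ∀ x, ContDiff ℝ (⊤ : ℕ∞) (fun v => fh x v) := fun x =>
    hfhs.comp (contDiff_const.prodMk contDiff_id)
  have hf1x : ∀ x, ContDiff ℝ (⊤ : ℕ∞) (fun v => f1 x v) := fun x =>
    hf1s.comp (contDiff_const.prodMk contDiff_id)
  have hfhv : ∀ v, ContDiff ℝ (⊤ : ℕ∞) (fun x => fh x v) := fun v =>
    hfhs.comp (contDiff_id.prodMk contDiff_const)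
  -- vanishing of gradients for large v
  have hgradV0 : ∀ x v, Rh < ‖v‖ → gradV fh x v = 0 := by
    intro x v hv
    funext i
    show pd i (fun w => fh x w) v = 0
    exact pd_zero_of_far (fun w hw => hRh x w hw) hv i
  have hgradX0 : ∀ x (v : V3), Rh ≤ ‖v‖ → gradX fh x v = 0 := by
    intro x v hv
    funext i
    have e : (fun y => fh y v) = fun _ => (0:ℝ) := funext fun y => hRh y v hv
    show fderiv ℝ (fun y => fh y v) x (Pi.single i 1) = 0
    rw [e]
    simp
  -- continuity facts
  have hdot2 : ∀ (U W : V3 → V3), Continuous U → Continuous W →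
      Continuous fun x => U x ⬝ᵥ W x := by
    intro U W hU hW
    have e : (fun x => U x ⬝ᵥ W x) = fun x => ∑ i : Fin 3, U x i * W x i := by
      funext x; simp [dotProduct]
    rw [e]
    exact continuous_finset_sum _ fun i _ =>
      ((continuous_apply i).comp hU).mul ((continuous_apply i).comp hW)
  -- the transport term vanishes
  have hcontT : Continuous (fun p : V3 × V3 => (p.2 ⬝ᵥ gradX fh p.1 p.2) * (p.2 ⬝ᵥ p.2)) := by
    apply Continuous.mul _ (hdotc.comp continuous_snd)
    have e : (fun p : V3 × V3 => p.2 ⬝ᵥ gradX fh p.1 p.2)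
        = fun p : V3 × V3 => ∑ i : Fin 3, p.2 i * gradX fh p.1 p.2 i := by
      funext p; simp [dotProduct]
    rw [e]
    exact continuous_finset_sum _ fun i _ =>
      ((continuous_apply i).comp continuous_snd).mul (gradX_cont hfhs i)
  have hsuppT : ∀ x (v : V3), Rh ≤ ‖v‖ → (v ⬝ᵥ gradX fh x v) * (v ⬝ᵥ v) = 0 := by
    intro x v hv
    rw [hgradX0 x v hv, dotProduct_zero, zero_mul]
  have hintT := prod_int L (fun x v => (v ⬝ᵥ gradX fh x v) * (v ⬝ᵥ v)) hcontT Rh hsuppT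
  have hT0 : (∫ x in box L, ∫ v : V3, (v ⬝ᵥ gradX fh x v) * (v ⬝ᵥ v)) = 0 := by
    have hs := MeasureTheory.integral_integral_swap
      (f := fun x v => (v ⬝ᵥ gradX fh x v) * (v ⬝ᵥ v))
      (μ := (volume : Measure V3).restrict (box L)) (ν := (volume : Measure V3)) hintT
    rw [hs]
    have hinner : ∀ v : V3, (∫ x in box L, (v ⬝ᵥ gradX fh x v) * (v ⬝ᵥ v)) = 0 := by
      intro v
      have e : (fun x => (v ⬝ᵥ gradX fh x v) * (v ⬝ᵥ v))
          = fun x => ∑ i : Fin 3, (v i * (v ⬝ᵥ v)) * pd i (fun y => fh y v) x := by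
        funext x
        simp only [gradX, pd, dotProduct]
        rw [Finset.sum_mul]
        refine Finset.sum_congr rfl fun i _ => by ring
      rw [e, integral_finset_sum]
      · apply Finset.sum_eq_zero
        intro i _
        rw [integral_const_mul,
          periodic_pd_zero hL (fun y => fh y v) (hfhv v) (fun j x => hfhper x v j) i, mul_zero]
      · intro i _
        have hpdc : Continuous fun x => pd i (fun y => fh y v) x :=
          ((hfhv v).continuous_fderiv (by simp)).clm_apply continuous_const
        exact ((continuous_const.mul hpdc).continuousOn).integrableOn_compact (isCompact_box L)
    simp only [hinner, integral_zero]
  -- the per-point kinetic identity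
  have hstar : ∀ x : V3, (∫ v : V3, f1 x v * (v ⬝ᵥ v))
      = (∫ v : V3, f0 x v * (v ⬝ᵥ v))
        + Δt * (∫ v : V3, fh x v * ((En x + E1 x) ⬝ᵥ v))
        - Δt * (∫ v : V3, (v ⬝ᵥ gradX fh x v) * (v ⬝ᵥ v)) := by
    intro x
    have hI0 : Integrable (fun v : V3 => f0 x v * (v ⬝ᵥ v)) (volume : Measure V3) :=
      integrable_far (((hf0x x).continuous).mul hdotc) R0
        (fun v hv => by rw [hR0 x v hv, zero_mul])
    have hIt1 : Integrable (fun v : V3 => (v ⬝ᵥ gradX fh x v) * (v ⬝ᵥ v))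
        (volume : Measure V3) :=
      integrable_far (hcontT.comp (Continuous.prodMk_right x)) Rh (hsuppT x)
    have hIt2 : Integrable (fun v : V3 =>
        (((2:ℝ)⁻¹ • (En x + E1 x) + v ⨯₃ Bh x) ⬝ᵥ gradV fh x v) * (v ⬝ᵥ v))
        (volume : Measure V3) := by
      refine integrable_far ?_ (max Rh 0 + 1) ?_
      · apply Continuous.mul _ hdotc
        have e : (fun v : V3 => ((2:ℝ)⁻¹ • (En x + E1 x) + v ⨯₃ Bh x) ⬝ᵥ gradV fh x v)
            = fun v : V3 => ∑ i : Fin 3,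
                ((2:ℝ)⁻¹ • (En x + E1 x) + v ⨯₃ Bh x) i * gradV fh x v i := by
          funext v; simp [dotProduct]
        rw [e]
        refine continuous_finset_sum _ fun i _ => Continuous.mul ?_ ?_
        · exact (contDiff_cross_comp ((2:ℝ)⁻¹ • (En x + E1 x)) (Bh x) i).continuous
        · exact (gradV_cont hfhs i).comp (Continuous.prodMk_right x)
      · intro v hv
        have hRv : Rh < ‖v‖ := by
          have := le_max_left Rh 0; linarith
        rw [hgradV0 x v hRv, dotProduct_zero, zero_mul]
    have hp : ∀ v : V3, f1 x v * (v ⬝ᵥ v)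
        = f0 x v * (v ⬝ᵥ v) - Δt * ((v ⬝ᵥ gradX fh x v) * (v ⬝ᵥ v))
          - Δt * ((((2:ℝ)⁻¹ • (En x + E1 x) + v ⨯₃ Bh x) ⬝ᵥ gradV fh x v) * (v ⬝ᵥ v)) := by
      intro v
      have h := hVlasovFull x v
      set a := v ⬝ᵥ gradX fh x v with ha
      set b := ((2:ℝ)⁻¹ • (En x + E1 x) + v ⨯₃ Bh x) ⬝ᵥ gradV fh x v with hb
      have h1 : f1 x v = f0 x v - Δt * a - Δt * b := by
        field_simp at h
        linarith
      rw [h1]; ring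
    have hforce : (∫ v : V3,
        (((2:ℝ)⁻¹ • (En x + E1 x) + v ⨯₃ Bh x) ⬝ᵥ gradV fh x v) * (v ⬝ᵥ v))
        = -2 * ∫ v : V3, fh x v * (((2:ℝ)⁻¹ • (En x + E1 x)) ⬝ᵥ v) :=
      force_IBP (fun w => fh x w) (hfhx x) Rh (fun w hw => hRh x w hw)
        ((2:ℝ)⁻¹ • (En x + E1 x)) (Bh x)
    have hhalf : (∫ v : V3, fh x v * (((2:ℝ)⁻¹ • (En x + E1 x)) ⬝ᵥ v))
        = 2⁻¹ * ∫ v : V3, fh x v * ((En x + E1 x) ⬝ᵥ v) := by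
      have e : (fun v : V3 => fh x v * (((2:ℝ)⁻¹ • (En x + E1 x)) ⬝ᵥ v))
          = fun v : V3 => 2⁻¹ * (fh x v * ((En x + E1 x) ⬝ᵥ v)) := by
        funext v
        rw [smul_dotProduct]
        simp [smul_eq_mul]
        ring
      rw [e, integral_const_mul]
    calc (∫ v : V3, f1 x v * (v ⬝ᵥ v))
        = ∫ v : V3, (f0 x v * (v ⬝ᵥ v) - Δt * ((v ⬝ᵥ gradX fh x v) * (v ⬝ᵥ v))
            - Δt * ((((2:ℝ)⁻¹ • (En x + E1 x) + v ⨯₃ Bh x) ⬝ᵥ gradV fh x v) * (v ⬝ᵥ v))) := by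
          simp only [hp]
      _ = (∫ v : V3, f0 x v * (v ⬝ᵥ v)) - Δt * (∫ v : V3, (v ⬝ᵥ gradX fh x v) * (v ⬝ᵥ v))
            - Δt * (∫ v : V3,
              (((2:ℝ)⁻¹ • (En x + E1 x) + v ⨯₃ Bh x) ⬝ᵥ gradV fh x v) * (v ⬝ᵥ v)) := by
          have hIA : Integrable (fun v : V3 =>
              f0 x v * (v ⬝ᵥ v) - Δt * ((v ⬝ᵥ gradX fh x v) * (v ⬝ᵥ v)))
              (volume : Measure V3) := hI0.sub (hIt1.const_mul Δt)
          have hIB : Integrable (fun v : V3 => Δt *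
              ((((2:ℝ)⁻¹ • (En x + E1 x) + v ⨯₃ Bh x) ⬝ᵥ gradV fh x v) * (v ⬝ᵥ v)))
              (volume : Measure V3) := hIt2.const_mul Δt
          have hIC : Integrable (fun v : V3 => Δt * ((v ⬝ᵥ gradX fh x v) * (v ⬝ᵥ v)))
              (volume : Measure V3) := hIt1.const_mul Δt
          rw [integral_sub hIA hIB, integral_sub hI0 hIC, integral_const_mul, integral_const_mul]
      _ = (∫ v : V3, f0 x v * (v ⬝ᵥ v))
            + Δt * (∫ v : V3, fh x v * ((En x + E1 x) ⬝ᵥ v))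
            - Δt * (∫ v : V3, (v ⬝ᵥ gradX fh x v) * (v ⬝ᵥ v)) := by
          rw [hforce, hhalf]; ring
  -- integrability over the box of the three pieces
  have hIb0 : IntegrableOn (fun x => ∫ v : V3, f0 x v * (v ⬝ᵥ v)) (box L) volume := by
    have h := (prod_int L (fun x v => f0 x v * (v ⬝ᵥ v))
      (hf0s.continuous.mul (hdotc.comp continuous_snd)) R0
      (fun x v hv => by show f0 x v * (v ⬝ᵥ v) = 0; rw [hR0 x v hv, zero_mul])).integral_prod_left
    exact h
  have hIbG : IntegrableOn (fun x => ∫ v : V3, fh x v * ((En x + E1 x) ⬝ᵥ v)) (box L)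
      volume := by
    have hcG : Continuous (fun p : V3 × V3 => fh p.1 p.2 * ((En p.1 + E1 p.1) ⬝ᵥ p.2)) := by
      apply hfhs.continuous.mul
      have e : (fun p : V3 × V3 => (En p.1 + E1 p.1) ⬝ᵥ p.2)
          = fun p : V3 × V3 => ∑ i : Fin 3, (En p.1 i + E1 p.1 i) * p.2 i := by
        funext p; simp [dotProduct]
      rw [e]
      refine continuous_finset_sum _ fun i _ => Continuous.mul ?_ ?_
      · exact ((continuous_apply i).comp (hEn.1.continuous.comp continuous_fst)).add
          ((continuous_apply i).comp (hE1.1.continuous.comp continuous_fst))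
      · exact (continuous_apply i).comp continuous_snd
    have h := (prod_int L (fun x v => fh x v * ((En x + E1 x) ⬝ᵥ v)) hcG Rh
      (fun x v hv => by
        show fh x v * ((En x + E1 x) ⬝ᵥ v) = 0
        rw [hRh x v hv, zero_mul])).integral_prod_left
    exact h
  have hIbT : IntegrableOn (fun x => ∫ v : V3, (v ⬝ᵥ gradX fh x v) * (v ⬝ᵥ v)) (box L)
      volume := hintT.integral_prod_left
  -- the kinetic energy balance
  have hkin : kinE L f1 = kinE L f0
      + Δt * (∫ x in box L, ∫ v : V3, fh x v * ((En x + E1 x) ⬝ᵥ v)) := by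
    have h1 : kinE L f1 = ∫ x in box L, ((∫ v : V3, f0 x v * (v ⬝ᵥ v))
        + Δt * (∫ v : V3, fh x v * ((En x + E1 x) ⬝ᵥ v))
        - Δt * (∫ v : V3, (v ⬝ᵥ gradX fh x v) * (v ⬝ᵥ v))) := by
      simp only [kinE]
      exact setIntegral_congr_fun (measurableSet_box L) fun x _ => hstar x
    have hIA : IntegrableOn (fun x => (∫ v : V3, f0 x v * (v ⬝ᵥ v))
        + Δt * (∫ v : V3, fh x v * ((En x + E1 x) ⬝ᵥ v))) (box L) volume :=
      hIb0.add (hIbG.const_mul Δt)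
    have hIB : IntegrableOn (fun x =>
        Δt * (∫ v : V3, (v ⬝ᵥ gradX fh x v) * (v ⬝ᵥ v))) (box L) volume :=
      hIbT.const_mul Δt
    have hIC : IntegrableOn (fun x =>
        Δt * (∫ v : V3, fh x v * ((En x + E1 x) ⬝ᵥ v))) (box L) volume :=
      hIbG.const_mul Δt
    rw [h1, integral_sub hIA hIB, integral_add hIb0 hIC,
      integral_const_mul, integral_const_mul, hT0]
    simp only [kinE]
    ring
  -- rewrite the current term
  have hJ : ∀ x : V3, (∫ v : V3, fh x v * ((En x + E1 x) ⬝ᵥ v))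
      = (En x + E1 x) ⬝ᵥ Jcur fh x := by
    intro x
    have hJint : Integrable (fun v : V3 => fh x v • v) (volume : Measure V3) :=
      integrable_far (((hfhx x).continuous).smul continuous_id) Rh
        (fun v hv => by rw [hRh x v hv, zero_smul])
    have hcomp : ∀ i : Fin 3, Jcur fh x i = ∫ v : V3, fh x v * v i := by
      intro i
      have h := (ContinuousLinearMap.proj i : V3 →L[ℝ] ℝ).integral_comp_comm hJint
      simpa [Jcur] using h.symm
    have hIc : ∀ i : Fin 3, Integrable (fun v : V3 => (En x + E1 x) i * (fh x v * v i))
        (volume : Measure V3) := fun i =>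
      (integrable_far (((hfhx x).continuous).fun_mul (continuous_apply i)) Rh
        (fun v hv => by rw [hRh x v hv, zero_mul])).const_mul _
    calc (∫ v : V3, fh x v * ((En x + E1 x) ⬝ᵥ v))
        = ∫ v : V3, ∑ i : Fin 3, (En x + E1 x) i * (fh x v * v i) := by
          refine integral_congr_ae (Filter.Eventually.of_forall fun v => ?_)
          simp only [dotProduct]
          rw [Finset.mul_sum]
          exact Finset.sum_congr rfl fun i _ => by ring
      _ = ∑ i : Fin 3, ∫ v : V3, (En x + E1 x) i * (fh x v * v i) :=
          integral_finset_sum _ fun i _ => hIc i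
      _ = ∑ i : Fin 3, (En x + E1 x) i * Jcur fh x i := by
          exact Finset.sum_congr rfl fun i _ => by rw [integral_const_mul, hcomp i]
      _ = (En x + E1 x) ⬝ᵥ Jcur fh x := by simp [dotProduct]
  -- field update identities
  have hBt2 : ∀ x : V3, Bt x = Bh x - Δt • curl E1 x := by
    intro x; rw [hBt' x, hB1' x]; module
  have hBm2 : ∀ x : V3, Bm x = Bh x + Δt • curl En x := by
    intro x
    have h1 := hBn' x
    have h2 := hBh' x
    have h3 : Bh x = Bm x - (Δt / 2) • curl En x - (Δt / 2) • curl En x := by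
      rw [h2, h1]
    rw [h3]; module
  have hJx : ∀ x : V3, Jcur fh x = curl Bh x - Δt⁻¹ • (E1 x - En x) := by
    intro x
    rw [hAmpere x]
    abel
  -- pointwise key identity
  have key : ∀ x : V3, Δt * ((En x + E1 x) ⬝ᵥ Jcur fh x)
      + (E1 x ⬝ᵥ E1 x + Bh x ⬝ᵥ Bt x) - (En x ⬝ᵥ En x + Bm x ⬝ᵥ Bh x)
      = -Δt * (Bh x ⬝ᵥ curl (fun y => En y + E1 y) x - (En x + E1 x) ⬝ᵥ curl Bh x) := by
    intro x
    rw [hJx x, hBt2 x, hBm2 x, curl_add En E1 hEn.1 hE1.1 x]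
    simp only [dotProduct, Fin.sum_univ_three, Pi.add_apply, Pi.sub_apply,
      Pi.smul_apply, smul_eq_mul]
    field_simp
    ring
  -- the curl integration by parts
  have hIBP : (∫ x in box L,
      (Bh x ⬝ᵥ curl (fun y => En y + E1 y) x - (En x + E1 x) ⬝ᵥ curl Bh x)) = 0 :=
    curl_IBP hL (fun y => En y + E1 y) Bh (hEn.1.add hE1.1) hBh.1
      (fun x i => by show En _ + E1 _ = En x + E1 x; rw [hEn.2 x i, hE1.2 x i]) hBh.2
  -- integrability of the field terms
  have hcurlc : ∀ (U : V3 → V3), ContDiff ℝ (⊤ : ℕ∞) U → Continuous (curl U) := by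
    intro U hU
    have hpdc : ∀ (a b : Fin 3), Continuous fun x => pd a (fun y => U y b) x := fun a b =>
      ((contDiff_comp_pi hU b).continuous_fderiv (by simp)).clm_apply continuous_const
    apply continuous_pi
    intro i
    fin_cases i
    · show Continuous fun x => curl U x (0 : Fin 3)
      have e : (fun x => curl U x (0 : Fin 3))
          = fun x => pd 1 (fun y => U y 2) x - pd 2 (fun y => U y 1) x := by
        funext x; simp [curl]
      rw [e]; exact (hpdc 1 2).sub (hpdc 2 1)
    · show Continuous fun x => curl U x (1 : Fin 3)
      have e : (fun x => curl U x (1 : Fin 3))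
          = fun x => pd 2 (fun y => U y 0) x - pd 0 (fun y => U y 2) x := by
        funext x; simp [curl]
      rw [e]; exact (hpdc 2 0).sub (hpdc 0 2)
    · show Continuous fun x => curl U x (2 : Fin 3)
      have e : (fun x => curl U x (2 : Fin 3))
          = fun x => pd 0 (fun y => U y 1) x - pd 1 (fun y => U y 0) x := by
        funext x; simp [curl]
      rw [e]; exact (hpdc 0 1).sub (hpdc 1 0)
  have hIP1 : IntegrableOn (fun x => E1 x ⬝ᵥ E1 x + Bh x ⬝ᵥ Bt x) (box L) volume :=
    ((((hdot2 E1 E1 hE1.1.continuous hE1.1.continuous).add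
      (hdot2 Bh Bt hBh.1.continuous hBt.1.continuous))).continuousOn).integrableOn_compact
      (isCompact_box L)
  have hIP0 : IntegrableOn (fun x => En x ⬝ᵥ En x + Bm x ⬝ᵥ Bh x) (box L) volume :=
    ((((hdot2 En En hEn.1.continuous hEn.1.continuous).add
      (hdot2 Bm Bh hBm.1.continuous hBh.1.continuous))).continuousOn).integrableOn_compact
      (isCompact_box L)
  have hIGC : IntegrableOn (fun x => (En x + E1 x) ⬝ᵥ Jcur fh x) (box L) volume :=
    hIbG.congr (Filter.Eventually.of_forall fun x => hJ x)
  have hGJ : (∫ x in box L, ∫ v : V3, fh x v * ((En x + E1 x) ⬝ᵥ v))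
      = ∫ x in box L, (En x + E1 x) ⬝ᵥ Jcur fh x :=
    setIntegral_congr_fun (measurableSet_box L) fun x _ => hJ x
  -- combine everything
  have hsum : Δt * (∫ x in box L, (En x + E1 x) ⬝ᵥ Jcur fh x)
      + (∫ x in box L, (E1 x ⬝ᵥ E1 x + Bh x ⬝ᵥ Bt x))
      - (∫ x in box L, (En x ⬝ᵥ En x + Bm x ⬝ᵥ Bh x)) = 0 := by
    have hsplit : Δt * (∫ x in box L, (En x + E1 x) ⬝ᵥ Jcur fh x)
        + (∫ x in box L, (E1 x ⬝ᵥ E1 x + Bh x ⬝ᵥ Bt x))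
        - (∫ x in box L, (En x ⬝ᵥ En x + Bm x ⬝ᵥ Bh x))
        = ∫ x in box L, (Δt * ((En x + E1 x) ⬝ᵥ Jcur fh x)
            + (E1 x ⬝ᵥ E1 x + Bh x ⬝ᵥ Bt x) - (En x ⬝ᵥ En x + Bm x ⬝ᵥ Bh x)) := by
      have hIA : IntegrableOn (fun x => Δt * ((En x + E1 x) ⬝ᵥ Jcur fh x)
          + (E1 x ⬝ᵥ E1 x + Bh x ⬝ᵥ Bt x)) (box L) volume :=
        (hIGC.const_mul Δt).add hIP1
      have hIB : IntegrableOn (fun x => Δt * ((En x + E1 x) ⬝ᵥ Jcur fh x)) (box L) volume :=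
        hIGC.const_mul Δt
      rw [integral_sub hIA hIP0, integral_add hIB hIP1, integral_const_mul]
    rw [hsplit]
    have h2 : (∫ x in box L, (Δt * ((En x + E1 x) ⬝ᵥ Jcur fh x)
        + (E1 x ⬝ᵥ E1 x + Bh x ⬝ᵥ Bt x) - (En x ⬝ᵥ En x + Bm x ⬝ᵥ Bh x)))
        = ∫ x in box L, -Δt * (Bh x ⬝ᵥ curl (fun y => En y + E1 y) x
            - (En x + E1 x) ⬝ᵥ curl Bh x) :=
      setIntegral_congr_fun (measurableSet_box L) fun x _ => key x
    rw [h2, integral_const_mul, hIBP, mul_zero]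
  rw [hkin, hGJ]
  linarith [hsum]
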